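/- Let M ≥ 1 and D ≥ 1 be natural numbers and δ > 0 a real. If β ≥ 2^{D}·(1 − (D−1)δ/(1 + (D−1)δ))^{−M} − 1, then for every real ρ > 0 condition C3 holds, i.e. M·log₂((1 + ρ + (D−1)δ)/((1 + (D−1)δ)(1+ρ))) + D·log₂((βM + 2M − 1)/((2M−1)(1+β))) + log₂(1+β) ≥ 0. (The proof lower-bounds the first term by M·log₂(1 − (D−1)δ/(1+(D−1)δ)) using ρ/(1+ρ) < 1, and the second term by −D using (βM+2M−1)/((2M−1)(1+β)) ≥ 1/2.) -/

import Mathlib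

/-!
Write `a = (D-1)δ ≥ 0`; then `1 - a/(1+a) = (1+a)⁻¹`, so the hypothesis says
`1 + β ≥ 2^D (1+a)^M`, i.e. `log₂(1+β) ≥ D + M log₂(1+a)`. This pays exactly for the other
two terms: the first logarithm is at least `-log₂(1+a)` because `(1+ρ+a)/(1+ρ) ≥ 1`, and the
second is at least `-1` because its argument is at least `1/2`.
-/

open Real

lemma one_sub_div_one_add {a : ℝ} (ha : 1 + a ≠ 0) : 1 - a / (1 + a) = (1 + a)⁻¹ := by
  field_simp
  ring

lemma inv_one_add_le_div_mul {a ρ : ℝ} (ha : 0 ≤ a) (hρ : 0 ≤ ρ) :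
    (1 + a)⁻¹ ≤ (1 + ρ + a) / ((1 + a) * (1 + ρ)) := by
  rw [inv_eq_one_div, div_le_div_iff₀ (by positivity) (by positivity)]
  nlinarith

lemma neg_logb_one_add_le_logb_div_mul {b a ρ : ℝ} (hb : 1 < b) (ha : 0 ≤ a) (hρ : 0 ≤ ρ) :
    -logb b (1 + a) ≤ logb b ((1 + ρ + a) / ((1 + a) * (1 + ρ))) := by
  rw [← logb_inv]
  exact logb_le_logb_of_le hb (by positivity) (inv_one_add_le_div_mul ha hρ)

lemma half_le_div_mul {M β : ℝ} (hM : 1 ≤ M) (hβ : 0 < 1 + β) :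
    2⁻¹ ≤ (β * M + 2 * M - 1) / ((2 * M - 1) * (1 + β)) := by
  rw [inv_eq_one_div, div_le_div_iff₀ two_pos (mul_pos (by linarith) hβ)]
  linarith

lemma neg_one_le_logb_two_div_mul {M β : ℝ} (hM : 1 ≤ M) (hβ : 0 < 1 + β) :
    -1 ≤ logb 2 ((β * M + 2 * M - 1) / ((2 * M - 1) * (1 + β))) :=
  calc -1 = logb 2 2⁻¹ := by rw [logb_inv, logb_self_eq_one one_lt_two]
    _ ≤ _ := logb_le_logb_of_le one_lt_two (by norm_num) (half_le_div_mul hM hβ)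

lemma add_mul_logb_two_le_logb_two {D M : ℕ} {a β : ℝ} (ha : 0 < 1 + a)
    (hβ : 2 ^ D * (1 + a) ^ M - 1 ≤ β) :
    D + M * logb 2 (1 + a) ≤ logb 2 (1 + β) := by
  have h := logb_le_logb_of_le (b := 2) one_lt_two (by positivity) (le_add_of_sub_left_le hβ)
  rwa [logb_mul (by positivity) (by positivity), logb_pow, logb_pow,
    logb_self_eq_one one_lt_two, mul_one] at h

/-- If `β ≥ 2^D (1 - (D-1)δ/(1+(D-1)δ))^{-M} - 1` then condition C3 holds for
every `ρ > 0`. -/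
theorem jsdm_C3_sufficient_beta
    (M D : ℕ) (hM : 1 ≤ M) (hD : 1 ≤ D) (δ : ℝ) (hδ : 0 < δ) (β : ℝ)
    (hβ : (2 : ℝ) ^ D *
        ((1 - ((D : ℝ) - 1) * δ / (1 + ((D : ℝ) - 1) * δ)) ^ M)⁻¹ - 1 ≤ β) :
    ∀ ρ : ℝ, 0 < ρ →
      0 ≤ (M : ℝ) * logb 2 ((1 + ρ + ((D : ℝ) - 1) * δ) /
          ((1 + ((D : ℝ) - 1) * δ) * (1 + ρ))) +
        (D : ℝ) * logb 2 ((β * (M : ℝ) + 2 * (M : ℝ) - 1) /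
          ((2 * (M : ℝ) - 1) * (1 + β))) + logb 2 (1 + β) := by
  intro ρ hρ
  set a : ℝ := ((D : ℝ) - 1) * δ
  have ha : 0 ≤ a := mul_nonneg (by simpa using hD) hδ.le
  rw [one_sub_div_one_add (by positivity), inv_pow, inv_inv] at hβ
  have hβ_pos : 0 < 1 + β := by
    have : (1 : ℝ) ≤ 2 ^ D * (1 + a) ^ M :=
      one_le_mul_of_one_le_of_one_le (one_le_pow₀ one_le_two) (one_le_pow₀ (by linarith))
    linarith
  have h₁ := mul_le_mul_of_nonneg_left
    (neg_logb_one_add_le_logb_div_mul one_lt_two ha hρ.le) M.cast_nonneg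
  have h₂ := mul_le_mul_of_nonneg_left
    (neg_one_le_logb_two_div_mul (by exact_mod_cast hM : (1 : ℝ) ≤ M) hβ_pos) D.cast_nonneg
  have h₃ := add_mul_logb_two_le_logb_two (by positivity) hβ
  linarith
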